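/- arXiv:1807.03086 — 7 statements merged into one kernel-verified Lean document; each statement's English description precedes it below -/
import Mathlib

section
/- Let K be a field of characteristic 0 and (g, κ) a finite-dimensional quadratic Lie algebra over K. Then the following are equivalent: (i) there exists an alternating bilinear form θ : g × g → K such that κ(x,⁅y,z⁆) = θ(⁅x,y⁆,z) − θ(⁅x,z⁆,y) + θ(⁅y,z⁆,x) for all x,y,z ∈ g (i.e. the Cartan 3-cocycle Ω(x,y,z) = κ(x,⁅y,z⁆) is a Chevalley–Eilenberg coboundary); (ii) there exists a Lie algebra derivation D : g → g such that κ(Dx,y) + κ(x,Dy) = 2·κ(x,y) for all x,y ∈ g (i.e. a derivation whose κ-symmetric part is the identity). -/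
/-!
By nondegeneracy, the alternating forms are exactly `θ = κ ∘ A` with `A` skew-adjoint for `κ`, and
invariance turns the coboundary into `dθ(x, y, z) = κ(A⁅x,y⁆ - ⁅Ax,y⁆ - ⁅x,Ay⁆, z)`, while the
Cartan cocycle is `κ(⁅x,y⁆, z)`. Hence `Ω = dθ` means `A⁅x,y⁆ - ⁅Ax,y⁆ - ⁅x,Ay⁆ = ⁅x,y⁆`, i.e.
that `D = 1 + A` is a derivation; and `A` is skew-adjoint iff the symmetric part of `D` is `1`.
-/

open LinearMap (BilinForm)

theorem isDerivation_one_add_iff {R L : Type*} [CommRing R] [LieRing L] [LieAlgebra R L]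
    (A : L →ₗ[R] L) :
    (∀ x y : L, (1 + A) ⁅x, y⁆ = ⁅(1 + A) x, y⁆ + ⁅x, (1 + A) y⁆) ↔
      ∀ x y : L, A ⁅x, y⁆ - ⁅A x, y⁆ - ⁅x, A y⁆ = ⁅x, y⁆ := by
  refine forall₂_congr fun x y => ?_
  simp only [LinearMap.add_apply, Module.End.one_apply, add_lie, lie_add]
  rw [← sub_eq_zero, iff_comm, ← sub_eq_zero]
  abel_nf

namespace LinearMap.BilinForm

section LieAlgebra

variable {R L : Type*} [CommRing R] [LieRing L] [LieAlgebra R L] {κ : BilinForm R L}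

/-- For alternating `θ`, the Chevalley–Eilenberg differential of the 2-cochain `θ`. -/
def lieCoboundary (θ : BilinForm R L) (x y z : L) : R :=
  θ ⁅x, y⁆ z - θ ⁅x, z⁆ y + θ ⁅y, z⁆ x

theorem lieCoboundary_comp_of_isSkewAdjoint (hsymm : ∀ x y : L, κ x y = κ y x)
    (hinv : ∀ x y z : L, κ ⁅x, y⁆ z = κ x ⁅y, z⁆) {A : L →ₗ[R] L}
    (hA : LinearMap.IsSkewAdjoint κ A) (x y z : L) :
    lieCoboundary (κ ∘ₗ A) x y z = κ (A ⁅x, y⁆ - ⁅A x, y⁆ - ⁅x, A y⁆) z := by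
  have hxz : κ (A ⁅x, z⁆) y = κ ⁅x, A y⁆ z := by
    rw [hA, hinv, Pi.neg_apply, lie_neg, lie_skew, hinv]
  have hyz : κ (A ⁅y, z⁆) x = -κ ⁅A x, y⁆ z := by
    rw [hA, Pi.neg_apply, map_neg, hsymm ⁅y, z⁆, ← hinv]
  simp only [lieCoboundary, LinearMap.comp_apply, hxz, hyz, map_sub, LinearMap.sub_apply]
  ring

theorem cartan_eq_lieCoboundary_comp_iff (hsymm : ∀ x y : L, κ x y = κ y x)
    (hnondeg : κ.SeparatingLeft) (hinv : ∀ x y z : L, κ ⁅x, y⁆ z = κ x ⁅y, z⁆)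
    {A : L →ₗ[R] L} (hA : LinearMap.IsSkewAdjoint κ A) :
    (∀ x y z : L, κ x ⁅y, z⁆ = lieCoboundary (κ ∘ₗ A) x y z) ↔
      ∀ x y : L, A ⁅x, y⁆ - ⁅A x, y⁆ - ⁅x, A y⁆ = ⁅x, y⁆ := by
  simp only [lieCoboundary_comp_of_isSkewAdjoint hsymm hinv hA, ← hinv]
  refine ⟨fun h x y => (sub_eq_zero.1 <| hnondeg _ fun z => ?_).symm, fun h x y z => by rw [h]⟩
  rw [LinearMap.map_sub₂, h, sub_self]

theorem isAlt_comp_of_isSkewAdjoint [NoZeroDivisors R] [CharZero R]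
    (hsymm : ∀ x y : L, κ x y = κ y x) {A : L →ₗ[R] L} (hA : LinearMap.IsSkewAdjoint κ A) :
    LinearMap.IsAlt (κ ∘ₗ A) := by
  refine LinearMap.isAlt_iff_eq_neg_flip.2 (LinearMap.ext₂ fun x y => ?_)
  simp only [LinearMap.neg_apply, LinearMap.flip_apply, LinearMap.comp_apply, hA x y, Pi.neg_apply,
    map_neg, hsymm x]

end LieAlgebra

theorem add_eq_two_mul_iff_isSkewAdjoint {R M : Type*} [CommRing R] [AddCommGroup M] [Module R M]
    (κ : BilinForm R M) (A : M →ₗ[R] M) :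
    (∀ x y : M, κ ((1 + A) x) y + κ x ((1 + A) y) = 2 * κ x y) ↔
      LinearMap.IsSkewAdjoint κ A := by
  refine forall₂_congr fun x y => ?_
  simp only [LinearMap.add_apply, Module.End.one_apply, map_add, Pi.neg_apply, map_neg]
  constructor <;> intro h <;> linear_combination h

theorem exists_isSkewAdjoint_comp_eq {K V : Type*} [Field K] [AddCommGroup V] [Module K V]
    [FiniteDimensional K V] {κ : BilinForm K V} (hsymm : ∀ x y : V, κ x y = κ y x)
    (hnondeg : κ.SeparatingLeft) {θ : BilinForm K V} (hθ : LinearMap.IsAlt θ) :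
    ∃ A : V →ₗ[K] V, LinearMap.IsSkewAdjoint κ A ∧ κ ∘ₗ A = θ := by
  have hκ : κ.Nondegenerate := ⟨hnondeg, fun y hy => hnondeg y fun x => hsymm y x ▸ hy x⟩
  have hcomp : κ ∘ₗ ((κ.toDual hκ).symm.toLinearMap ∘ₗ θ) = θ := by
    ext u v
    simp
  refine ⟨_, fun u v => ?_, hcomp⟩
  rw [Pi.neg_apply, map_neg, hsymm u, ← LinearMap.comp_apply κ, ← LinearMap.comp_apply κ,
    hcomp, hθ.neg]

end LinearMap.BilinForm

open LinearMap.BilinForm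

/-- For a finite-dimensional quadratic Lie algebra `(g, κ)` over a field of characteristic
zero, the Cartan 3-cocycle `Ω(x,y,z) = κ(x,⁅y,z⁆)` is a Chevalley–Eilenberg coboundary
(of an alternating bilinear form `θ`) if and only if there is a Lie algebra derivation
of `g` whose `κ`-symmetric part is the identity. -/
theorem cartan_cocycle_coboundary_iff_derivation
    (K : Type*) [Field K] [CharZero K]
    (g : Type*) [LieRing g] [LieAlgebra K g] [Module.Finite K g]
    (κ : g →ₗ[K] g →ₗ[K] K)
    (hsymm : ∀ x y : g, κ x y = κ y x)
    (hnondeg : ∀ x : g, (∀ y : g, κ x y = 0) → x = 0)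
    (hinv : ∀ x y z : g, κ ⁅x, y⁆ z = κ x ⁅y, z⁆) :
    (∃ θ : g →ₗ[K] g →ₗ[K] K, (∀ x : g, θ x x = 0) ∧
        ∀ x y z : g, κ x ⁅y, z⁆ = θ ⁅x, y⁆ z - θ ⁅x, z⁆ y + θ ⁅y, z⁆ x) ↔
    (∃ D : g →ₗ[K] g, (∀ x y : g, D ⁅x, y⁆ = ⁅D x, y⁆ + ⁅x, D y⁆) ∧
        ∀ x y : g, κ (D x) y + κ x (D y) = 2 * κ x y) := by
  constructor
  · rintro ⟨θ, hθ, hcocycle⟩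
    obtain ⟨A, hA, rfl⟩ := exists_isSkewAdjoint_comp_eq hsymm hnondeg hθ
    refine ⟨1 + A, (isDerivation_one_add_iff A).2 ?_, (add_eq_two_mul_iff_isSkewAdjoint κ A).2 hA⟩
    exact (cartan_eq_lieCoboundary_comp_iff hsymm hnondeg hinv hA).1 hcocycle
  · rintro ⟨D, hD, hDκ⟩
    obtain ⟨A, rfl⟩ : ∃ A, D = 1 + A := ⟨D - 1, (add_sub_cancel 1 D).symm⟩
    have hA := (add_eq_two_mul_iff_isSkewAdjoint κ A).1 hDκ
    refine ⟨κ ∘ₗ A, isAlt_comp_of_isSkewAdjoint hsymm hA,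
      (cartan_eq_lieCoboundary_comp_iff hsymm hnondeg hinv hA).2 ?_⟩
    exact (isDerivation_one_add_iff A).1 hD
end

section
/- Let K be a field of characteristic 0 and (g, κ) a nontrivial finite-dimensional quadratic Lie algebra over K such that every Lie algebra derivation D : g → g is κ-antisymmetric, i.e. κ(Dx,y) = −κ(x,Dy) for all x,y ∈ g. Then there is no alternating bilinear form θ : g × g → K with κ(x,⁅y,z⁆) = θ(⁅x,y⁆,z) − θ(⁅x,z⁆,y) + θ(⁅y,z⁆,x) for all x,y,z ∈ g; that is, (g,κ) is Cartan-3-regular. -/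
/-!
Write the alternating form as `θ(x, y) = κ(Dx, y)`, which is possible by nondegeneracy in finite
dimension; `D` is then `κ`-skew. Feeding this into the coboundary identity and using invariance
shows `D⁅y, z⁆ = ⁅Dy, z⁆ + ⁅y, Dz⁆ + ⁅y, z⁆`, i.e. `D + id` is a derivation. By hypothesis
`D + id` is `κ`-skew as well, so the identity is `κ`-skew and `κ = 0` in characteristic `0`,
contradicting nondegeneracy on a nontrivial algebra.
-/

namespace LinearMap

theorem exists_comp_eq_of_separatingLeft {K V : Type*} [Field K] [AddCommGroup V] [Module K V]
    [FiniteDimensional K V] {κ : V →ₗ[K] V →ₗ[K] K} (hκ : κ.SeparatingLeft)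
    (θ : V →ₗ[K] V →ₗ[K] K) : ∃ D : V →ₗ[K] V, κ ∘ₗ D = θ := by
  have hinj : Function.Injective κ := ker_eq_bot.mp (separatingLeft_iff_ker_eq_bot.mp hκ)
  let e := κ.linearEquivOfInjective hinj Subspace.dual_finrank_eq.symm
  refine ⟨e.symm.toLinearMap ∘ₗ θ, ?_⟩
  ext x y
  exact LinearMap.congr_fun (e.apply_symm_apply (θ x)) y

variable {R M : Type*} [CommRing R] [AddCommGroup M] [Module R M] {κ : M →ₗ[R] M →ₗ[R] R}

theorem skew_of_comp_eq_isAlt (hsymm : ∀ x y, κ x y = κ y x) {θ : M →ₗ[R] M →ₗ[R] R}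
    (hθ : θ.IsAlt) {D : M →ₗ[R] M} (hD : κ ∘ₗ D = θ) (x y : M) :
    κ (D x) y = -κ x (D y) := by
  have hκD (a b : M) : κ (D a) b = θ a b := by rw [← hD]; rfl
  rw [hκD, ← hθ.neg, hsymm x, hκD]

theorem eq_zero_of_skew_of_skew_add_id [NoZeroDivisors R] [CharZero R] {D E : M → M}
    (hD : ∀ x y, κ (D x) y = -κ x (D y)) (hE : ∀ x y, κ (E x) y = -κ x (E y))
    (hED : ∀ x, E x = D x + x) : κ = 0 := by
  ext x y
  have hid : κ x y = -κ x y := by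
    have := hE x y
    simp only [hED, map_add, add_apply, hD x y] at this
    linear_combination this
  exact CharZero.eq_neg_self_iff.mp hid

end LinearMap

section Coboundary

variable {R L : Type*} [CommRing R] [LieRing L] [LieAlgebra R L] {κ : L →ₗ[R] L →ₗ[R] R}

theorem apply_lie_eq_of_cartan_eq_coboundary (hsymm : ∀ x y, κ x y = κ y x)
    (hκ : κ.SeparatingLeft) (hinv : ∀ x y z : L, κ ⁅x, y⁆ z = κ x ⁅y, z⁆) {D : L → L}
    (hD : ∀ x y, κ (D x) y = -κ x (D y))
    (hcob : ∀ x y z, κ x ⁅y, z⁆ = κ (D ⁅x, y⁆) z - κ (D ⁅x, z⁆) y + κ (D ⁅y, z⁆) x)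
    (y z : L) : D ⁅y, z⁆ = ⁅D y, z⁆ + ⁅y, D z⁆ + ⁅y, z⁆ := by
  rw [← sub_eq_zero]
  refine hκ _ fun x => ?_
  have h := hcob x y z
  rw [hD, hinv, hD, hinv] at h
  rw [← lie_skew (D y) z]
  simp only [map_sub, map_add, map_neg, LinearMap.sub_apply, LinearMap.add_apply,
    LinearMap.neg_apply]
  linear_combination -h + hsymm x ⁅y, z⁆ + hsymm x ⁅y, D z⁆ - hsymm x ⁅z, D y⁆

end Coboundary

/-- A nontrivial finite-dimensional quadratic Lie algebra `(g, κ)` over a field of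
characteristic zero all of whose derivations are `κ`-antisymmetric is
Cartan-3-regular: the Cartan 3-cocycle `Ω(x,y,z) = κ(x,⁅y,z⁆)` is not a
Chevalley–Eilenberg coboundary of any alternating bilinear form. -/
theorem antisymmetric_derivations_cartan_three_regular
    (K : Type*) [Field K] [CharZero K]
    (g : Type*) [LieRing g] [LieAlgebra K g] [Module.Finite K g] [Nontrivial g]
    (κ : g →ₗ[K] g →ₗ[K] K)
    (hsymm : ∀ x y : g, κ x y = κ y x)
    (hnondeg : ∀ x : g, (∀ y : g, κ x y = 0) → x = 0)
    (hinv : ∀ x y z : g, κ ⁅x, y⁆ z = κ x ⁅y, z⁆)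
    (hanti : ∀ D : g →ₗ[K] g, (∀ x y : g, D ⁅x, y⁆ = ⁅D x, y⁆ + ⁅x, D y⁆) →
        ∀ x y : g, κ (D x) y = - κ x (D y)) :
    ¬ ∃ θ : g →ₗ[K] g →ₗ[K] K, (∀ x : g, θ x x = 0) ∧
        ∀ x y z : g, κ x ⁅y, z⁆ = θ ⁅x, y⁆ z - θ ⁅x, z⁆ y + θ ⁅y, z⁆ x := by
  rintro ⟨θ, hθ, hcob⟩
  have hκ : κ.SeparatingLeft := hnondeg
  obtain ⟨D, hD⟩ := LinearMap.exists_comp_eq_of_separatingLeft hκ θ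
  have hDskew := LinearMap.skew_of_comp_eq_isAlt hsymm hθ hD
  have hDlie := apply_lie_eq_of_cartan_eq_coboundary hsymm hκ hinv hDskew (by
    simpa only [← hD, LinearMap.comp_apply] using hcob)
  let E : g →ₗ[K] g := D + LinearMap.id
  have hEder (x y : g) : E ⁅x, y⁆ = ⁅E x, y⁆ + ⁅x, E y⁆ := by
    simp only [E, LinearMap.add_apply, LinearMap.id_apply, hDlie, add_lie, lie_add]
    abel
  have hκzero := LinearMap.eq_zero_of_skew_of_skew_add_id hDskew (hanti _ hEder) fun _ => rfl
  exact LinearMap.not_separatingLeft_zero g g _ _ (hκzero ▸ hκ)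
end

section
/- Let K be a field, V a finite-dimensional K-vector space, κ : V × V → K a nondegenerate symmetric bilinear form, and q ∈ V ⊗[K] V its inverse element. Then for every linear endomorphism D : V → V and every scalar λ ∈ K, one has (D ⊗ id + id ⊗ D)(q) = λ • q if and only if κ(Dx,y) + κ(x,Dy) = λ·κ(x,y) for all x,y ∈ V. -/
/-!
Tensors in `V ⊗ V` are separated by contracting their first factor with linear forms, and by
nondegeneracy every linear form is `κ x` for some `x`. Contracting `(D ⊗ id + id ⊗ D) q`
with `κ x` gives `z + D x`, where `z` is the vector with `κ z = κ x ∘ D`; so the eigenvector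
equation for `q` becomes `κ x ∘ D + κ (D x) = λ • κ x` for all `x`.
-/

open TensorProduct Module

namespace TensorProduct

variable {R M N : Type*} [CommSemiring R] [AddCommMonoid M] [Module R M] [AddCommMonoid N]
  [Module R N]

def contractFst (φ : Dual R M) : M ⊗[R] N →ₗ[R] N :=
  lift ((LinearMap.lsmul R N).comp φ)

@[simp]
theorem contractFst_tmul (φ : Dual R M) (m : M) (n : N) :
    contractFst φ (m ⊗ₜ[R] n) = φ m • n := rfl

theorem contractFst_map_id_left (φ : Dual R M) (f : M →ₗ[R] M) (t : M ⊗[R] N) :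
    contractFst φ (map f LinearMap.id t) = contractFst (φ ∘ₗ f) t := by
  induction t using TensorProduct.induction_on with
  | zero => simp
  | tmul m n => simp
  | add s t hs ht => simp only [map_add, hs, ht]

theorem contractFst_map_id_right (φ : Dual R M) (g : N →ₗ[R] N) (t : M ⊗[R] N) :
    contractFst φ (map LinearMap.id g t) = g (contractFst φ t) := by
  induction t using TensorProduct.induction_on with
  | zero => simp
  | tmul m n => simp
  | add s t hs ht => simp only [map_add, hs, ht]

end TensorProduct

theorem TensorProduct.ext_contractFst {K M N : Type*} [Field K] [AddCommGroup M] [Module K M]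
    [FiniteDimensional K M] [AddCommGroup N] [Module K N] {s t : M ⊗[K] N}
    (h : ∀ φ : Dual K M, contractFst φ s = contractFst φ t) : s = t := by
  let e := (evalEquiv K M).rTensor N ≪≫ₗ dualTensorHomEquiv K (Dual K M) N
  have he : ∀ (u : M ⊗[K] N) φ, e u φ = contractFst φ u := by
    intro u φ
    induction u using TensorProduct.induction_on with
    | zero => simp
    | tmul m n => simp [e]
    | add s t hs ht => simp_all
  exact e.injective (LinearMap.ext fun φ ↦ by rw [he, he, h])

theorem LinearMap.SeparatingLeft.bijective {K V : Type*} [Field K] [AddCommGroup V] [Module K V]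
    [FiniteDimensional K V] {B : V →ₗ[K] V →ₗ[K] K} (hB : B.SeparatingLeft) :
    Function.Bijective B := by
  have hinj : Function.Injective B := LinearMap.ker_eq_bot.mp (separatingLeft_iff_ker_eq_bot.mp hB)
  exact ⟨hinj, (LinearMap.injective_iff_surjective_of_finrank_eq_finrank
      Subspace.dual_finrank_eq.symm).mp hinj⟩

theorem inverse_element_smul_iff_symmetric_part_general
    (K : Type*) [Field K]
    (V : Type*) [AddCommGroup V] [Module K V] [Module.Finite K V]
    (κ : V →ₗ[K] V →ₗ[K] K)
    (hnondeg : ∀ x : V, (∀ y : V, κ x y = 0) → x = 0)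
    (q : V ⊗[K] V)
    -- `q` is the inverse element of `κ`: contracting the first tensor factor of `q`
    -- with the linear form `κ x = κ(x, ·)` yields `x`, for every `x`.
    (hq : ∀ x : V, TensorProduct.lift ((LinearMap.lsmul K V).comp (κ x)) q = x)
    (D : V →ₗ[K] V) (lam : K) :
    ((TensorProduct.map D LinearMap.id + TensorProduct.map LinearMap.id D :
        V ⊗[K] V →ₗ[K] V ⊗[K] V)) q = lam • q ↔
      ∀ x y : V, κ (D x) y + κ x (D y) = lam * κ x y := by
  have hκ : Function.Bijective κ := LinearMap.SeparatingLeft.bijective hnondeg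
  replace hq : ∀ x, contractFst (κ x) q = x := hq
  have hκq : ∀ φ, κ (contractFst φ q) = φ := hκ.2.forall.2 fun z ↦ by rw [hq z]
  set Δ : V ⊗[K] V →ₗ[K] V ⊗[K] V := map D LinearMap.id + map LinearMap.id D
  calc Δ q = lam • q ↔ ∀ x, contractFst (κ x) (Δ q) = contractFst (κ x) (lam • q) :=
        ⟨fun h x ↦ by rw [h], fun h ↦ ext_contractFst (hκ.2.forall.2 h)⟩
    _ ↔ ∀ x, κ x ∘ₗ D + κ (D x) = lam • κ x := by
        simp only [Δ, LinearMap.add_apply, contractFst_map_id_left, contractFst_map_id_right,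
          map_smul, hq, ← hκ.1.eq_iff, map_add, hκq]
    _ ↔ ∀ x y, κ x (D y) + κ (D x) y = lam * κ x y := by
        simp only [LinearMap.ext_iff, LinearMap.add_apply, LinearMap.comp_apply,
          LinearMap.smul_apply, smul_eq_mul]
    _ ↔ _ := forall₂_congr fun x y ↦ by rw [add_comm]

/-- Let `κ` be a nondegenerate symmetric bilinear form on a finite-dimensional vector
space `V` over a field `K` and let `q ∈ V ⊗ V` be its inverse element.  For an
endomorphism `D` of `V` and a scalar `λ`, one has `(D ⊗ id + id ⊗ D)(q) = λ • q` if and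
only if `κ(Dx,y) + κ(x,Dy) = λ·κ(x,y)` for all `x, y`. -/
theorem inverse_element_smul_iff_symmetric_part
    (K : Type*) [Field K]
    (V : Type*) [AddCommGroup V] [Module K V] [Module.Finite K V]
    (κ : V →ₗ[K] V →ₗ[K] K)
    (hsymm : ∀ x y : V, κ x y = κ y x)
    (hnondeg : ∀ x : V, (∀ y : V, κ x y = 0) → x = 0)
    (q : V ⊗[K] V)
    -- `q` is the inverse element of `κ`: contracting the first tensor factor of `q`
    -- with the linear form `κ x = κ(x, ·)` yields `x`, for every `x`.
    (hq : ∀ x : V, TensorProduct.lift ((LinearMap.lsmul K V).comp (κ x)) q = x)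
    (D : V →ₗ[K] V) (lam : K) :
    ((TensorProduct.map D LinearMap.id + TensorProduct.map LinearMap.id D :
        V ⊗[K] V →ₗ[K] V ⊗[K] V)) q = lam • q ↔
      ∀ x y : V, κ (D x) y + κ x (D y) = lam * κ x y :=
  inverse_element_smul_iff_symmetric_part_general K V κ hnondeg q hq D lam
end

section
/- Let K be a field, V a K-vector space of finite dimension N, and n ≥ 1 an integer. For a ∈ V^{⊗n}, let β(a) : V → V^{⊗(n+1)} be the linear map v ↦ a⊗v − v⊗a (the restriction to V of the inner derivation ad_a of the tensor algebra T(V)). Then S_n(β(a)) = ζ_n(a) − N·a, where S_n is the first-factor partial trace and ζ_n is the cyclic permutation of tensor factors. -/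
/-!
Write a linear map `f : V → W` in a basis `bᵢ` with coordinate forms `bᵢ*` as
`f = ∑ bᵢ* ⊗ f bᵢ`; the partial trace then contracts `bᵢ*` with the first tensor factor of
`f bᵢ`. For `v ↦ v ⊗ a` this gives `∑ bᵢ*(bᵢ) a = N a`, and for `v ↦ x ⊗ u ⊗ v` it gives
`∑ bᵢ*(x) u ⊗ bᵢ = u ⊗ x`, the cyclic rotation of `x ⊗ u`. Both sides of the theorem are linear
in `a`, so pure tensors suffice.
-/

open scoped TensorProduct

theorem LinearMap.eq_sum_coord_smulRight {R V M ι : Type*} [CommSemiring R] [AddCommMonoid V]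
    [Module R V] [AddCommMonoid M] [Module R M] [Fintype ι] (b : Module.Basis ι R V)
    (f : V →ₗ[R] M) : f = ∑ i, (b.coord i).smulRight (f (b i)) :=
  b.ext fun j => by classical simp [Finsupp.single_apply]

section PartialTrace

variable {R V : Type*} [CommRing R] [AddCommGroup V] [Module R V] {n : ℕ}

variable (R) in
def tprodSnocₗ (w : Fin n → V) : V →ₗ[R] ⨂[R] (_ : Fin (n + 1)), V :=
  (PiTensorProduct.tprod R (s := fun _ : Fin (n + 1) => V)).curryRight w

variable (R) in
def tprodConsₗ (w : Fin n → V) : V →ₗ[R] ⨂[R] (_ : Fin (n + 1)), V :=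
  (PiTensorProduct.tprod R (s := fun _ : Fin (n + 1) => V)).toLinearMap (Fin.cons 0 w) 0

@[simp]
theorem tprodSnocₗ_apply (w : Fin n → V) (v : V) :
    tprodSnocₗ R w v = PiTensorProduct.tprod R (Fin.snoc w v) := rfl

@[simp]
theorem tprodConsₗ_apply (w : Fin n → V) (v : V) :
    tprodConsₗ R w v = PiTensorProduct.tprod R (Fin.cons v w) := by
  simp [tprodConsₗ, Fin.update_cons_zero]

def IsFirstPartialTrace
    (S : (V →ₗ[R] ⨂[R] (_ : Fin (n + 1)), V) →ₗ[R] ⨂[R] (_ : Fin n), V) : Prop :=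
  ∀ (α : V →ₗ[R] R) (w : Fin (n + 1) → V),
    S (α.smulRight (PiTensorProduct.tprod R w))
      = α (w 0) • PiTensorProduct.tprod R (fun i : Fin n => w i.succ)

variable [Module.Free R V] [Module.Finite R V]

theorem IsFirstPartialTrace.apply_tprodConsₗ
    {S : (V →ₗ[R] ⨂[R] (_ : Fin (n + 1)), V) →ₗ[R] ⨂[R] (_ : Fin n), V}
    (hS : IsFirstPartialTrace S) [StrongRankCondition R] (w : Fin n → V) :
    S (tprodConsₗ R w) = (Module.finrank R V : R) • PiTensorProduct.tprod R w := by
  rw [(tprodConsₗ R w).eq_sum_coord_smulRight (Module.Free.chooseBasis R V), map_sum]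
  simp [hS _ _, Module.finrank_eq_card_chooseBasisIndex, Nat.cast_smul_eq_nsmul]

theorem IsFirstPartialTrace.apply_tprodSnocₗ_cons
    {S : (V →ₗ[R] ⨂[R] (_ : Fin (n + 2)), V) →ₗ[R] ⨂[R] (_ : Fin (n + 1)), V}
    (hS : IsFirstPartialTrace S) (x : V) (u : Fin n → V) :
    S (tprodSnocₗ R (Fin.cons x u)) = PiTensorProduct.tprod R (Fin.snoc u x) := by
  let b := Module.Free.chooseBasis R V
  rw [(tprodSnocₗ R (Fin.cons x u)).eq_sum_coord_smulRight b, map_sum]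
  simp only [tprodSnocₗ_apply, ← Fin.cons_snoc_eq_snoc_cons, hS _ _, Fin.cons_zero, Fin.cons_succ,
    Module.Basis.coord_apply]
  simp_rw [← tprodSnocₗ_apply (R := R), ← map_smul, ← map_sum, b.sum_repr]

end PartialTrace

/-- Let `V` be a vector space of finite dimension `N` over a field `K` and `n ≥ 1`.  For
`a ∈ V^{⊗n}` let `β a : V → V^{⊗(n+1)}` be `v ↦ a⊗v − v⊗a` (the restriction to `V` of the
inner derivation `ad_a` of the tensor algebra).  Then `S_n (β a) = ζ_n a − N • a`, where
`S_n` is the first-factor partial trace and `ζ_n` the cyclic permutation of tensor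
factors. -/
theorem partial_trace_of_inner_derivation
    (K : Type*) [Field K]
    (V : Type*) [AddCommGroup V] [Module K V] [Module.Finite K V]
    (N : ℕ) (hN : Module.finrank K V = N)
    (n : ℕ) (hn : 1 ≤ n)
    -- the map `a ↦ β a`, `β a : v ↦ a⊗v − v⊗a`
    (β : (⨂[K] (_ : Fin n), V) →ₗ[K] (V →ₗ[K] ⨂[K] (_ : Fin (n + 1)), V))
    (hβ : ∀ (w : Fin n → V) (v : V),
        β (PiTensorProduct.tprod K w) v
          = PiTensorProduct.tprod K (Fin.snoc w v)
            - PiTensorProduct.tprod K (Fin.cons v w))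
    -- the first-factor partial trace `S_n`
    (S : (V →ₗ[K] ⨂[K] (_ : Fin (n + 1)), V) →ₗ[K] ⨂[K] (_ : Fin n), V)
    (hS : ∀ (α : V →ₗ[K] K) (w : Fin (n + 1) → V),
        S (α.smulRight (PiTensorProduct.tprod K w))
          = α (w 0) • PiTensorProduct.tprod K (fun i : Fin n => w i.succ))
    -- the cyclic permutation of tensor factors `ζ_n`
    (ζ : Module.End K (⨂[K] (_ : Fin n), V))
    (hζ : ∀ v : Fin n → V,
        ζ (PiTensorProduct.tprod K v) = PiTensorProduct.tprod K (fun i => v (finRotate n i))) :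
    ∀ a : ⨂[K] (_ : Fin n), V, S (β a) = ζ a - (N : K) • a := by
  obtain ⟨m, rfl⟩ : ∃ m, n = m + 1 := ⟨n - 1, by omega⟩
  have hβ_tprod (w : Fin (m + 1) → V) :
      β (PiTensorProduct.tprod K w) = tprodSnocₗ K w - tprodConsₗ K w :=
    LinearMap.ext fun v => by simp [hβ]
  have hSβ : S ∘ₗ β = ζ - (N : K) • LinearMap.id := by
    refine PiTensorProduct.ext (MultilinearMap.ext fun w => ?_)
    obtain ⟨x, u, rfl⟩ : ∃ x u, w = Fin.cons x u := ⟨w 0, Fin.tail w, (Fin.cons_self_tail w).symm⟩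
    simp only [LinearMap.compMultilinearMap_apply, LinearMap.comp_apply, LinearMap.sub_apply,
      LinearMap.smul_apply, LinearMap.id_apply, hβ_tprod, map_sub, hζ, ← Fin.snoc_eq_cons_rotate,
      IsFirstPartialTrace.apply_tprodSnocₗ_cons hS, IsFirstPartialTrace.apply_tprodConsₗ hS, hN]
  exact LinearMap.congr_fun hSβ
end

section
/- Let K be a field of characteristic 0, V a K-vector space of finite dimension N ≥ 2, and n ≥ 1 an integer. For a ∈ V^{⊗n}, let β(a) : V → V^{⊗(n+1)} be the linear map v ↦ a⊗v − v⊗a. Then the map a ↦ β(a) from V^{⊗n} to Hom_K(V, V^{⊗(n+1)}) is injective, the first-factor partial trace S_n : Hom_K(V, V^{⊗(n+1)}) → V^{⊗n} is surjective, and Hom_K(V, V^{⊗(n+1)}) is the direct sum (internal) of the kernel of S_n and the image of β; in particular the kernel of S_n is a complement of the restrictions of inner derivations in tensor degree n. -/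
/-!
Composing the partial trace with `β` gives `S_n ∘ β = C - N`, where `C` cyclically rotates the
tensor factors: in `S_n (v ↦ a ⊗ v)` the new last factor is contracted against the first factor
of `a`, which moves that factor to the end, while in `S_n (v ↦ v ⊗ a)` the contraction produces
the trace of the identity, `N`. Since `C ^ n = 1`, the spectrum of `C` consists of `n`-th roots of
unity, whereas `N ^ n ≠ 1` in characteristic zero. So `S_n ∘ β` is invertible, which forces
`β` injective, `S_n` surjective and `ker S_n ⊕ range β` to be everything.
-/

open scoped TensorProduct
open Function

theorem Module.Basis.sum_coord_smul_apply {R M N ι : Type*} [CommSemiring R] [AddCommMonoid M]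
    [Module R M] [AddCommMonoid N] [Module R N] [Fintype ι] (b : Module.Basis ι R M)
    (f : M →ₗ[R] N) (x : M) : ∑ i, b.coord i x • f (b i) = f x := by
  conv_rhs => rw [← b.sum_repr x]
  simp only [map_sum, map_smul, Module.Basis.coord_apply]

theorem Module.Basis.sum_coord_smulRight {R M N ι : Type*} [CommSemiring R] [AddCommMonoid M]
    [Module R M] [AddCommMonoid N] [Module R N] [Fintype ι] (b : Module.Basis ι R M)
    (f : M →ₗ[R] N) : ∑ i, (b.coord i).smulRight (f (b i)) = f := by
  ext x
  simp only [LinearMap.sum_apply, LinearMap.smulRight_apply]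
  exact b.sum_coord_smul_apply f x

theorem LinearMap.isCompl_ker_range_of_bijective_comp {R M N : Type*} [Ring R] [AddCommGroup M]
    [Module R M] [AddCommGroup N] [Module R N] {f : M →ₗ[R] N} {g : N →ₗ[R] M}
    (h : Bijective (g ∘ₗ f)) : IsCompl (ker g) (range f) := by
  refine ⟨?_, ?_⟩
  · rw [Submodule.disjoint_def]
    rintro _ hker ⟨a, rfl⟩
    rw [h.injective (by simpa using hker : g (f a) = g (f 0)), map_zero]
  · rw [codisjoint_iff, Submodule.eq_top_iff']
    intro y
    obtain ⟨a, ha⟩ := h.surjective (g y)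
    rw [← sub_add_cancel y (f a)]
    refine Submodule.add_mem_sup ?_ ⟨a, rfl⟩
    simpa [sub_eq_zero] using ha.symm

theorem spectrum.pow_eq_one_of_mem {𝕜 A : Type*} [Field 𝕜] [Ring A] [Algebra 𝕜 A] {a : A}
    {n : ℕ} (ha : a ^ n = 1) {k : 𝕜} (hk : k ∈ spectrum 𝕜 a) : k ^ n = 1 := by
  have hkn := spectrum.pow_mem_pow a n hk
  rw [ha, spectrum.mem_iff, ← map_one (algebraMap 𝕜 A), ← map_sub] at hkn
  by_contra hne
  exact hkn ((sub_ne_zero.mpr hne).isUnit.map _)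

theorem isUnit_sub_algebraMap_of_pow_eq_one {𝕜 A : Type*} [Field 𝕜] [Ring A] [Algebra 𝕜 A]
    {a : A} {n : ℕ} (ha : a ^ n = 1) {k : 𝕜} (hk : k ^ n ≠ 1) :
    IsUnit (a - algebraMap 𝕜 A k) := by
  rw [← neg_sub, IsUnit.neg_iff, ← spectrum.notMem_iff]
  exact mt (spectrum.pow_eq_one_of_mem ha) hk

theorem finRotate_pow_self (n : ℕ) : finRotate n ^ n = 1 := by
  rcases lt_or_ge n 2 with hn | hn
  · interval_cases n <;> exact Subsingleton.elim _ _
  · have h := pow_orderOf_eq_one (finRotate n)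
    rwa [(isCycle_finRotate_of_le hn).orderOf, support_finRotate_of_le hn, Finset.card_univ,
      Fintype.card_fin] at h

section CyclicShift

variable (K V : Type*) [CommSemiring K] [AddCommMonoid V] [Module K V] (n : ℕ)

noncomputable def cyclicShift : Module.End K (⨂[K] (_ : Fin n), V) :=
  (PiTensorProduct.reindex K (fun _ => V) (finRotate n).symm).toLinearMap

variable {K V n}

theorem cyclicShift_tprod (w : Fin n → V) :
    cyclicShift K V n (PiTensorProduct.tprod K w)
      = PiTensorProduct.tprod K (w ∘ finRotate n) := by
  simp [cyclicShift, comp_def]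

theorem cyclicShift_pow_tprod (k : ℕ) (w : Fin n → V) :
    (cyclicShift K V n ^ k) (PiTensorProduct.tprod K w)
      = PiTensorProduct.tprod K (w ∘ ⇑(finRotate n ^ k)) := by
  induction k generalizing w with
  | zero => rfl
  | succ k ih =>
    rw [pow_succ, Module.End.mul_apply, cyclicShift_tprod, ih, pow_succ', Equiv.Perm.coe_mul]
    rfl

variable (K V n) in
theorem cyclicShift_pow_self : cyclicShift K V n ^ n = 1 := by
  ext w
  simp [cyclicShift_pow_tprod, finRotate_pow_self]

end CyclicShift

section PartialTrace

variable {K V : Type*} [Field K] [AddCommGroup V] [Module K V] [Module.Finite K V] {n : ℕ}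
  {β : (⨂[K] (_ : Fin (n + 1)), V) →ₗ[K] (V →ₗ[K] ⨂[K] (_ : Fin (n + 1 + 1)), V)}
  {S : (V →ₗ[K] ⨂[K] (_ : Fin (n + 1 + 1)), V) →ₗ[K] ⨂[K] (_ : Fin (n + 1)), V}

theorem partialTrace_innerDerivation_tprod_cons
    (hβ : ∀ (w : Fin (n + 1) → V) (v : V),
      β (PiTensorProduct.tprod K w) v
        = PiTensorProduct.tprod K (Fin.snoc w v) - PiTensorProduct.tprod K (Fin.cons v w))
    (hS : ∀ (α : V →ₗ[K] K) (w : Fin (n + 1 + 1) → V),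
      S (α.smulRight (PiTensorProduct.tprod K w))
        = α (w 0) • PiTensorProduct.tprod K (fun i : Fin (n + 1) => w i.succ))
    (x : V) (u : Fin n → V) :
    S (β (PiTensorProduct.tprod K (Fin.cons x u)))
      = PiTensorProduct.tprod K (Fin.snoc u x)
        - Module.finrank K V • PiTensorProduct.tprod K (Fin.cons x u) := by
  set b := Module.finBasis K V
  have hterm : ∀ i, S ((b.coord i).smulRight (β (PiTensorProduct.tprod K (Fin.cons x u)) (b i)))
      = b.coord i x • PiTensorProduct.tprod K (Fin.snoc u (b i))
        - PiTensorProduct.tprod K (Fin.cons x u) := by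
    intro i
    rw [hβ, ← LinearMap.smulRightₗ_apply, map_sub, map_sub, LinearMap.smulRightₗ_apply,
      LinearMap.smulRightₗ_apply, hS, hS]
    simp [← Fin.cons_snoc_eq_snoc_cons]
  calc S (β (PiTensorProduct.tprod K (Fin.cons x u)))
      = ∑ i, S ((b.coord i).smulRight (β (PiTensorProduct.tprod K (Fin.cons x u)) (b i))) := by
        rw [← map_sum, b.sum_coord_smulRight]
    _ = ∑ i, (b.coord i x • PiTensorProduct.tprod K (Fin.snoc u (b i))
          - PiTensorProduct.tprod K (Fin.cons x u)) :=
        Finset.sum_congr rfl fun i _ => hterm i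
    _ = PiTensorProduct.tprod K (Fin.snoc u x)
          - Module.finrank K V • PiTensorProduct.tprod K (Fin.cons x u) := by
        rw [Finset.sum_sub_distrib]
        congr 1
        · exact b.sum_coord_smul_apply
            ((PiTensorProduct.tprod K (s := fun _ : Fin (n + 1) => V)).curryRight u) x
        · simp

theorem partialTrace_comp_innerDerivation
    (hβ : ∀ (w : Fin (n + 1) → V) (v : V),
      β (PiTensorProduct.tprod K w) v
        = PiTensorProduct.tprod K (Fin.snoc w v) - PiTensorProduct.tprod K (Fin.cons v w))
    (hS : ∀ (α : V →ₗ[K] K) (w : Fin (n + 1 + 1) → V),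
      S (α.smulRight (PiTensorProduct.tprod K w))
        = α (w 0) • PiTensorProduct.tprod K (fun i : Fin (n + 1) => w i.succ)) :
    S ∘ₗ β = cyclicShift K V (n + 1) - algebraMap K _ (Module.finrank K V : K) := by
  ext w
  refine Fin.consCases (fun x u => ?_) w
  simp [partialTrace_innerDerivation_tprod_cons hβ hS, cyclicShift_tprod,
    Fin.snoc_eq_cons_rotate, comp_def]

end PartialTrace

/-- Let `V` be a vector space of finite dimension `N ≥ 2` over a field of characteristic
zero and `n ≥ 1`.  With `β a : v ↦ a⊗v − v⊗a` (restriction of the inner derivation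
`ad_a`) and `S_n` the first-factor partial trace, the map `β` is injective, `S_n` is
surjective, and `Hom_K(V, V^{⊗(n+1)})` is the internal direct sum of `ker S_n` and
`range β`; in particular `ker S_n` is a complement of the restrictions of the inner
derivations in tensor degree `n`. -/
theorem kernel_partial_trace_complements_inner_derivations
    (K : Type*) [Field K] [CharZero K]
    (V : Type*) [AddCommGroup V] [Module K V] [Module.Finite K V]
    (N : ℕ) (hN : Module.finrank K V = N) (hN2 : 2 ≤ N)
    (n : ℕ) (hn : 1 ≤ n)
    -- the map `a ↦ β a`, `β a : v ↦ a⊗v − v⊗a`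
    (β : (⨂[K] (_ : Fin n), V) →ₗ[K] (V →ₗ[K] ⨂[K] (_ : Fin (n + 1)), V))
    (hβ : ∀ (w : Fin n → V) (v : V),
        β (PiTensorProduct.tprod K w) v
          = PiTensorProduct.tprod K (Fin.snoc w v)
            - PiTensorProduct.tprod K (Fin.cons v w))
    -- the first-factor partial trace `S_n`
    (S : (V →ₗ[K] ⨂[K] (_ : Fin (n + 1)), V) →ₗ[K] ⨂[K] (_ : Fin n), V)
    (hS : ∀ (α : V →ₗ[K] K) (w : Fin (n + 1) → V),
        S (α.smulRight (PiTensorProduct.tprod K w))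
          = α (w 0) • PiTensorProduct.tprod K (fun i : Fin n => w i.succ)) :
    Function.Injective ⇑β ∧
    Function.Surjective ⇑S ∧
    LinearMap.ker S ⊓ LinearMap.range β = ⊥ ∧
    LinearMap.ker S ⊔ LinearMap.range β = ⊤ := by
  obtain ⟨m, rfl⟩ : ∃ m, n = m + 1 := ⟨n - 1, by omega⟩
  have hNpow : (N : K) ^ (m + 1) ≠ 1 := by
    exact_mod_cast (Nat.one_lt_pow m.succ_ne_zero hN2).ne'
  have hbij : Bijective (S ∘ₗ β) := by
    rw [← Module.End.isUnit_iff, partialTrace_comp_innerDerivation hβ hS, hN]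
    exact isUnit_sub_algebraMap_of_pow_eq_one (cyclicShift_pow_self K V _) hNpow
  have hcompl := LinearMap.isCompl_ker_range_of_bijective_comp hbij
  exact ⟨.of_comp (f := S) hbij.injective, .of_comp (g := β) hbij.surjective,
    hcompl.inf_eq_bot, hcompl.sup_eq_top⟩
end

section
/- Let K be a field and let (U, b_U) and (V, b_V) be cochain complexes of K-vector spaces indexed by ℤ (differentials of degree +1). Suppose i : U → V is a chain map that is injective in every degree and induces an isomorphism on cohomology in every degree. Then there exist a chain map p : V → U and a family of linear maps hⁿ : Vⁿ → V^{n−1} such that p ∘ i = id_U, id_V − i ∘ p = b_V ∘ h + h ∘ b_V (in every degree), and moreover h ∘ h = 0, h ∘ i = 0 and p ∘ h = 0. -/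
/-!
Choose in every degree a complement `E n` of `range i ⊔ ker b` in `V n`. Injectivity of `i` on
cohomology says that an element of `E n` whose differential lies in `range i` vanishes;
surjectivity says that every cocycle lies in `range i ⊔ range b`. Together they split
`V (n + 1) = i U ⊕ b (E n) ⊕ E (n + 1)`. On `i u + b e + e'` put `p = u` and `h = e`; since the
differential of `i u + b e + e'` is `i (b u) + b e' + 0`, all the identities are then checked
on the three components.
-/

open LinearMap Submodule

/-- `V (m - 1 + 1)` is not definitionally `V m`, so a family indexed by `n + 1` is extended to
all degrees through a cast. -/
theorem Int.exists_forall_add_one_eq {β : ℤ → Type*} (F : ∀ n, β (n + 1)) :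
    ∃ f : ∀ m, β m, ∀ n, f (n + 1) = F n :=
  ⟨fun m => cast (congrArg β (Int.sub_add_cancel m 1)) (F (m - 1)), fun n =>
    eq_of_heq ((cast_heq _ _).trans (congr_arg_heq F (Int.add_sub_cancel n 1)))⟩

namespace QuasiIsoContraction

variable {K : Type*} [Ring K] {U V : ℤ → Type*}
  [∀ n, AddCommGroup (U n)] [∀ n, Module K (U n)]
  [∀ n, AddCommGroup (V n)] [∀ n, Module K (V n)]
  {bU : ∀ n, U n →ₗ[K] U (n + 1)} (bV : ∀ n, V n →ₗ[K] V (n + 1))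
  (i : ∀ n, U n →ₗ[K] V n) (E : ∀ n, Submodule K (V n))

def decomp (n : ℤ) : U (n + 1) × E n × E (n + 1) →ₗ[K] V (n + 1) :=
  (i (n + 1)).coprod ((bV n ∘ₗ (E n).subtype).coprod (E (n + 1)).subtype)

theorem decomp_apply (n : ℤ) (x : U (n + 1) × E n × E (n + 1)) :
    decomp bV i E n x = i (n + 1) x.1 + (bV n x.2.1 + x.2.2) := rfl

variable {bV i E}

theorem mem_range_sup_ker_of_apply_mem_range
    (hbV : ∀ n v, bV (n + 1) (bV n v) = 0)
    (hi : ∀ n u, bV n (i n u) = i (n + 1) (bU n u))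
    (hinj : ∀ n, Function.Injective (i n))
    (hker : ∀ n, ∀ u : U (n + 1), bU (n + 1) u = 0 →
        (∃ w : V n, i (n + 1) u = bV n w) → ∃ w' : U n, u = bU n w')
    {n : ℤ} {v : V n} (hv : bV n v ∈ range (i (n + 1))) :
    v ∈ range (i n) ⊔ ker (bV n) := by
  obtain ⟨x, hx⟩ := hv
  have hx_cocycle : bU (n + 1) x = 0 := hinj _ <| by rw [map_zero, ← hi, hx, hbV]
  obtain ⟨y, rfl⟩ := hker n x hx_cocycle ⟨v, hx⟩
  refine mem_sup.2 ⟨i n y, mem_range_self _ y, v - i n y, ?_, add_sub_cancel _ _⟩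
  rw [mem_ker, map_sub, hi, hx, sub_self]

theorem range_le_range_sup_map_complement (hi : ∀ n u, bV n (i n u) = i (n + 1) (bU n u))
    (hE : ∀ n, IsCompl (range (i n) ⊔ ker (bV n)) (E n)) (n : ℤ) :
    range (bV n) ≤ range (i (n + 1)) ⊔ (E n).map (bV n) := by
  rintro _ ⟨w, rfl⟩
  have hw : w ∈ range (i n) ⊔ ker (bV n) ⊔ E n := (hE n).sup_eq_top ▸ mem_top
  obtain ⟨_, hs, e, he, rfl⟩ := mem_sup.1 hw
  obtain ⟨_, ⟨x, rfl⟩, k, hk, rfl⟩ := mem_sup.1 hs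
  rw [map_add, map_add, hi, mem_ker.1 hk, add_zero]
  exact add_mem (mem_sup_left (mem_range_self _ _)) (mem_sup_right (mem_map_of_mem he))

theorem decomp_surjective
    (hi : ∀ n u, bV n (i n u) = i (n + 1) (bU n u))
    (hsurj : ∀ n, ∀ v : V (n + 1), bV (n + 1) v = 0 →
        ∃ u : U (n + 1), bU (n + 1) u = 0 ∧ ∃ w : V n, v - i (n + 1) u = bV n w)
    (hE : ∀ n, IsCompl (range (i n) ⊔ ker (bV n)) (E n)) (n : ℤ) :
    Function.Surjective (decomp bV i E n) := by
  have hcocycle : ker (bV (n + 1)) ≤ range (i (n + 1)) ⊔ range (bV n) := fun v hv => by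
    obtain ⟨u, -, w, hw⟩ := hsurj n v hv
    exact mem_sup.2
      ⟨_, mem_range_self _ u, _, mem_range_self _ w, by rw [← hw, add_sub_cancel]⟩
  rw [← range_eq_top, decomp, range_coprod, range_coprod, range_comp, range_subtype,
    range_subtype, eq_top_iff, ← (hE (n + 1)).sup_eq_top, ← sup_assoc]
  refine sup_le_sup_right (sup_le le_sup_left (hcocycle.trans (sup_le le_sup_left ?_))) _
  exact range_le_range_sup_map_complement hi hE n

theorem eq_zero_of_mem_of_apply_mem_range
    (hbV : ∀ n v, bV (n + 1) (bV n v) = 0)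
    (hi : ∀ n u, bV n (i n u) = i (n + 1) (bU n u))
    (hinj : ∀ n, Function.Injective (i n))
    (hker : ∀ n, ∀ u : U (n + 1), bU (n + 1) u = 0 →
        (∃ w : V n, i (n + 1) u = bV n w) → ∃ w' : U n, u = bU n w')
    (hE : ∀ n, IsCompl (range (i n) ⊔ ker (bV n)) (E n))
    {n : ℤ} {e : V n} (he : e ∈ E n) (hbe : bV n e ∈ range (i (n + 1))) : e = 0 :=
  disjoint_def.1 (hE n).disjoint e (mem_range_sup_ker_of_apply_mem_range hbV hi hinj hker hbe) he

theorem decomp_injective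
    (hbV : ∀ n v, bV (n + 1) (bV n v) = 0)
    (hi : ∀ n u, bV n (i n u) = i (n + 1) (bU n u))
    (hinj : ∀ n, Function.Injective (i n))
    (hker : ∀ n, ∀ u : U (n + 1), bU (n + 1) u = 0 →
        (∃ w : V n, i (n + 1) u = bV n w) → ∃ w' : U n, u = bU n w')
    (hE : ∀ n, IsCompl (range (i n) ⊔ ker (bV n)) (E n)) (n : ℤ) :
    Function.Injective (decomp bV i E n) := by
  rw [← ker_eq_bot, eq_bot_iff]
  rintro ⟨u, e, e'⟩ h0
  rw [mem_ker, decomp_apply] at h0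
  dsimp only at h0
  have he' : (e' : V (n + 1)) = 0 := by
    refine eq_zero_of_mem_of_apply_mem_range hbV hi hinj hker hE e'.2 ⟨-bU (n + 1) u, ?_⟩
    have := congrArg (bV (n + 1)) h0
    rw [map_add, map_add, hi, hbV, zero_add, map_zero] at this
    rw [map_neg, neg_eq_iff_add_eq_zero, this]
  have he : (e : V n) = 0 := by
    refine eq_zero_of_mem_of_apply_mem_range hbV hi hinj hker hE e.2 ⟨-u, ?_⟩
    rw [he', add_zero] at h0
    rw [map_neg, neg_eq_iff_add_eq_zero, h0]
  have hu : u = 0 := hinj _ <| by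
    rwa [he, he', map_zero, add_zero, add_zero, ← map_zero (i (n + 1))] at h0
  simp [hu, Subtype.ext_iff, he, he']

noncomputable def retraction (hdecomp : ∀ n, Function.Bijective (decomp bV i E n)) (n : ℤ) :
    V (n + 1) →ₗ[K] U (n + 1) :=
  fst _ _ _ ∘ₗ (LinearEquiv.ofBijective _ (hdecomp n)).symm.toLinearMap

noncomputable def homotopy (hdecomp : ∀ n, Function.Bijective (decomp bV i E n)) (n : ℤ) :
    V (n + 1) →ₗ[K] V n :=
  (E n).subtype ∘ₗ fst _ _ _ ∘ₗ snd _ _ _ ∘ₗ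
    (LinearEquiv.ofBijective _ (hdecomp n)).symm.toLinearMap

variable (hdecomp : ∀ n, Function.Bijective (decomp bV i E n))

theorem retraction_decomp (n : ℤ) (x : U (n + 1) × E n × E (n + 1)) :
    retraction hdecomp n (decomp bV i E n x) = x.1 := by
  simp [retraction]

theorem homotopy_decomp (n : ℤ) (x : U (n + 1) × E n × E (n + 1)) :
    homotopy hdecomp n (decomp bV i E n x) = x.2.1 := by
  simp [homotopy]

theorem homotopy_apply_mem (n : ℤ) (v : V (n + 1)) : homotopy hdecomp n v ∈ E n := by
  simp [homotopy]

theorem differential_decomp (hbV : ∀ n v, bV (n + 1) (bV n v) = 0)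
    (hi : ∀ n u, bV n (i n u) = i (n + 1) (bU n u)) (n : ℤ)
    (x : U (n + 1) × E n × E (n + 1)) :
    bV (n + 1) (decomp bV i E n x) = decomp bV i E (n + 1) (bU (n + 1) x.1, x.2.2, 0) := by
  simp [decomp_apply, hi, hbV]

theorem retraction_comp_inclusion (n : ℤ) :
    retraction hdecomp n ∘ₗ i (n + 1) = LinearMap.id := by
  ext u
  simpa [decomp_apply] using retraction_decomp hdecomp n (u, 0, 0)

theorem homotopy_comp_inclusion (n : ℤ) : homotopy hdecomp n ∘ₗ i (n + 1) = 0 := by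
  ext u
  simpa [decomp_apply] using homotopy_decomp hdecomp n (u, 0, 0)

theorem homotopy_comp_homotopy (n : ℤ) :
    homotopy hdecomp n ∘ₗ homotopy hdecomp (n + 1) = 0 := by
  ext v
  simpa [decomp_apply] using
    homotopy_decomp hdecomp n (0, 0, ⟨_, homotopy_apply_mem hdecomp (n + 1) v⟩)

theorem retraction_comp_homotopy (n : ℤ) :
    retraction hdecomp n ∘ₗ homotopy hdecomp (n + 1) = 0 := by
  ext v
  simpa [decomp_apply] using
    retraction_decomp hdecomp n (0, 0, ⟨_, homotopy_apply_mem hdecomp (n + 1) v⟩)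

theorem differential_comp_retraction (hbV : ∀ n v, bV (n + 1) (bV n v) = 0)
    (hi : ∀ n u, bV n (i n u) = i (n + 1) (bU n u)) (n : ℤ) :
    bU (n + 1) ∘ₗ retraction hdecomp n = retraction hdecomp (n + 1) ∘ₗ bV (n + 1) := by
  ext v
  obtain ⟨x, rfl⟩ := (hdecomp n).2 v
  rw [comp_apply, comp_apply, differential_decomp hbV hi, retraction_decomp, retraction_decomp]

theorem id_sub_inclusion_comp_retraction (hbV : ∀ n v, bV (n + 1) (bV n v) = 0)
    (hi : ∀ n u, bV n (i n u) = i (n + 1) (bU n u)) (n : ℤ) :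
    LinearMap.id - i (n + 1) ∘ₗ retraction hdecomp n =
      bV n ∘ₗ homotopy hdecomp n + homotopy hdecomp (n + 1) ∘ₗ bV (n + 1) := by
  ext v
  obtain ⟨x, rfl⟩ := (hdecomp n).2 v
  rw [LinearMap.sub_apply, LinearMap.add_apply, comp_apply, comp_apply, comp_apply,
    differential_decomp hbV hi, retraction_decomp, homotopy_decomp, homotopy_decomp,
    LinearMap.id_apply, decomp_apply]
  exact add_sub_cancel_left _ _

end QuasiIsoContraction

open QuasiIsoContraction in
theorem injective_quasi_iso_extends_to_contraction_general
    (K : Type*) [Field K]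
    (U V : ℤ → Type*)
    [∀ n, AddCommGroup (U n)] [∀ n, Module K (U n)]
    [∀ n, AddCommGroup (V n)] [∀ n, Module K (V n)]
    (bU : ∀ n, U n →ₗ[K] U (n + 1)) (bV : ∀ n, V n →ₗ[K] V (n + 1))
    (hbV : ∀ n, (bV (n + 1)).comp (bV n) = 0)
    (i : ∀ n, U n →ₗ[K] V n)
    (hi : ∀ n, (bV n).comp (i n) = (i (n + 1)).comp (bU n))
    (hinj : ∀ n, Function.Injective (i n))
    -- `i` is surjective on cohomology in every degree
    (hsurj : ∀ n, ∀ v : V (n + 1), bV (n + 1) v = 0 →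
        ∃ u : U (n + 1), bU (n + 1) u = 0 ∧ ∃ w : V n, v - i (n + 1) u = bV n w)
    -- `i` is injective on cohomology in every degree
    (hker : ∀ n, ∀ u : U (n + 1), bU (n + 1) u = 0 →
        (∃ w : V n, i (n + 1) u = bV n w) → ∃ w' : U n, u = bU n w') :
    ∃ (p : ∀ n, V n →ₗ[K] U n) (h : ∀ n, V (n + 1) →ₗ[K] V n),
      -- `p` is a chain map
      (∀ n, (bU n).comp (p n) = (p (n + 1)).comp (bV n)) ∧
      -- `p ∘ i = id`
      (∀ n, (p n).comp (i n) = LinearMap.id) ∧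
      -- `id − i ∘ p = b_V ∘ h + h ∘ b_V` in every degree
      (∀ n, (LinearMap.id : V (n + 1) →ₗ[K] V (n + 1)) - (i (n + 1)).comp (p (n + 1))
          = (bV n).comp (h n) + (h (n + 1)).comp (bV (n + 1))) ∧
      -- side conditions
      (∀ n, (h n).comp (h (n + 1)) = 0) ∧
      (∀ n, (h n).comp (i (n + 1)) = 0) ∧
      (∀ n, (p n).comp (h n) = 0) := by
  have hbV' (n : ℤ) (v : V n) : bV (n + 1) (bV n v) = 0 := LinearMap.congr_fun (hbV n) v
  have hi' (n : ℤ) (u : U n) : bV n (i n u) = i (n + 1) (bU n u) := LinearMap.congr_fun (hi n) u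
  choose E hE using fun n => Submodule.exists_isCompl (range (i n) ⊔ ker (bV n))
  have hdecomp (n : ℤ) : Function.Bijective (decomp bV i E n) :=
    ⟨decomp_injective hbV' hi' hinj hker hE n, decomp_surjective hi' hsurj hE n⟩
  obtain ⟨p, hp⟩ :=
    Int.exists_forall_add_one_eq (β := fun m => V m →ₗ[K] U m) (retraction hdecomp)
  have hp_shift {P : ℤ → Prop} (hP : ∀ m, P (m + 1)) (n : ℤ) : P n := by
    simpa using hP (n - 1)
  refine ⟨p, homotopy hdecomp, hp_shift fun m => ?_, hp_shift fun m => ?_, fun n => ?_,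
    homotopy_comp_homotopy hdecomp, homotopy_comp_inclusion hdecomp, hp_shift fun m => ?_⟩
  · rw [hp, hp, differential_comp_retraction hdecomp hbV' hi']
  · rw [hp, retraction_comp_inclusion]
  · rw [hp, id_sub_inclusion_comp_retraction hdecomp hbV' hi']
  · rw [hp, retraction_comp_homotopy]

/-- If a chain map `i : (U, b_U) → (V, b_V)` of cochain complexes of vector spaces is
injective in every degree and induces an isomorphism on cohomology in every degree, then
it extends to a homotopy contraction: there are a chain map `p : V → U` and a degree `−1`
map `h` with `p ∘ i = id`, `id − i ∘ p = b_V ∘ h + h ∘ b_V`, and the side conditions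
`h ∘ h = 0`, `h ∘ i = 0`, `p ∘ h = 0`. -/
theorem injective_quasi_iso_extends_to_contraction
    (K : Type*) [Field K]
    (U V : ℤ → Type*)
    [∀ n, AddCommGroup (U n)] [∀ n, Module K (U n)]
    [∀ n, AddCommGroup (V n)] [∀ n, Module K (V n)]
    (bU : ∀ n, U n →ₗ[K] U (n + 1)) (bV : ∀ n, V n →ₗ[K] V (n + 1))
    (hbU : ∀ n, (bU (n + 1)).comp (bU n) = 0)
    (hbV : ∀ n, (bV (n + 1)).comp (bV n) = 0)
    (i : ∀ n, U n →ₗ[K] V n)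
    (hi : ∀ n, (bV n).comp (i n) = (i (n + 1)).comp (bU n))
    (hinj : ∀ n, Function.Injective (i n))
    -- `i` is surjective on cohomology in every degree
    (hsurj : ∀ n, ∀ v : V (n + 1), bV (n + 1) v = 0 →
        ∃ u : U (n + 1), bU (n + 1) u = 0 ∧ ∃ w : V n, v - i (n + 1) u = bV n w)
    -- `i` is injective on cohomology in every degree
    (hker : ∀ n, ∀ u : U (n + 1), bU (n + 1) u = 0 →
        (∃ w : V n, i (n + 1) u = bV n w) → ∃ w' : U n, u = bU n w') :
    ∃ (p : ∀ n, V n →ₗ[K] U n) (h : ∀ n, V (n + 1) →ₗ[K] V n),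
      -- `p` is a chain map
      (∀ n, (bU n).comp (p n) = (p (n + 1)).comp (bV n)) ∧
      -- `p ∘ i = id`
      (∀ n, (p n).comp (i n) = LinearMap.id) ∧
      -- `id − i ∘ p = b_V ∘ h + h ∘ b_V` in every degree
      (∀ n, (LinearMap.id : V (n + 1) →ₗ[K] V (n + 1)) - (i (n + 1)).comp (p (n + 1))
          = (bV n).comp (h n) + (h (n + 1)).comp (bV (n + 1))) ∧
      -- side conditions
      (∀ n, (h n).comp (h (n + 1)) = 0) ∧
      (∀ n, (h n).comp (i (n + 1)) = 0) ∧
      (∀ n, (p n).comp (h n) = 0) :=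
  injective_quasi_iso_extends_to_contraction_general K U V bU bV hbV i hi hinj hsurj hker
end

section
/- Let K be a field and let (U, b_U) and (V, b_V) be cochain complexes of K-vector spaces indexed by ℤ. Suppose given chain maps i : U → V and p : V → U with p ∘ i = id_U, and a family of linear maps hⁿ : Vⁿ → V^{n−1} with id_V − i ∘ p = b_V ∘ h + h ∘ b_V. Then there exists a family of linear maps h'ⁿ : Vⁿ → V^{n−1} such that id_V − i ∘ p = b_V ∘ h' + h' ∘ b_V and the side conditions h' ∘ h' = 0, h' ∘ i = 0 and p ∘ h' = 0 hold. -/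
/-- Given chain maps `i : U → V`, `p : V → U` of cochain complexes of vector spaces with
`p ∘ i = id` and a homotopy `h` with `id − i ∘ p = b_V ∘ h + h ∘ b_V`, the homotopy can be
modified so that the side conditions `h' ∘ h' = 0`, `h' ∘ i = 0`, `p ∘ h' = 0` hold as
well. -/
theorem contraction_side_conditions_can_be_forced
    (K : Type*) [Field K]
    (U V : ℤ → Type*)
    [∀ n, AddCommGroup (U n)] [∀ n, Module K (U n)]
    [∀ n, AddCommGroup (V n)] [∀ n, Module K (V n)]
    (bU : ∀ n, U n →ₗ[K] U (n + 1)) (bV : ∀ n, V n →ₗ[K] V (n + 1))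
    (hbU : ∀ n, (bU (n + 1)).comp (bU n) = 0)
    (hbV : ∀ n, (bV (n + 1)).comp (bV n) = 0)
    (i : ∀ n, U n →ₗ[K] V n)
    (hi : ∀ n, (bV n).comp (i n) = (i (n + 1)).comp (bU n))
    (p : ∀ n, V n →ₗ[K] U n)
    (hp : ∀ n, (bU n).comp (p n) = (p (n + 1)).comp (bV n))
    (hpi : ∀ n, (p n).comp (i n) = LinearMap.id)
    (h : ∀ n, V (n + 1) →ₗ[K] V n)
    (hh : ∀ n, (LinearMap.id : V (n + 1) →ₗ[K] V (n + 1)) - (i (n + 1)).comp (p (n + 1))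
        = (bV n).comp (h n) + (h (n + 1)).comp (bV (n + 1))) :
    ∃ h' : ∀ n, V (n + 1) →ₗ[K] V n,
      (∀ n, (LinearMap.id : V (n + 1) →ₗ[K] V (n + 1)) - (i (n + 1)).comp (p (n + 1))
          = (bV n).comp (h' n) + (h' (n + 1)).comp (bV (n + 1))) ∧
      (∀ n, (h' n).comp (h' (n + 1)) = 0) ∧
      (∀ n, (h' n).comp (i (n + 1)) = 0) ∧
      (∀ n, (p n).comp (h' n) = 0) := by
  classical
  -- the projector onto the "complement" of the image of `i`
  set q : ∀ n, V n →ₗ[K] V n :=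
    fun n => LinearMap.id - (i n).comp (p n) with hqdef
  have hq : ∀ n (v : V n), q n v = v - i n (p n v) := by
    intro n v; simp [hqdef]
  -- pointwise versions of the hypotheses
  have hbV' : ∀ n (v : V n), bV (n + 1) (bV n v) = 0 := by
    intro n v
    have := congrArg (fun f => f v) (hbV n); simpa using this
  have hi' : ∀ n (u : U n), bV n (i n u) = i (n + 1) (bU n u) := by
    intro n u
    have := congrArg (fun f => f u) (hi n); simpa using this
  have hp' : ∀ n (v : V n), bU n (p n v) = p (n + 1) (bV n v) := by
    intro n v
    have := congrArg (fun f => f v) (hp n); simpa using this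
  have hpi' : ∀ n (u : U n), p n (i n u) = u := by
    intro n u
    have := congrArg (fun f => f u) (hpi n); simpa using this
  have hh' : ∀ n (v : V (n + 1)),
      v - i (n + 1) (p (n + 1) v) = bV n (h n v) + h (n + 1) (bV (n + 1) v) := by
    intro n v
    have := congrArg (fun f => f v) (hh n); simpa using this
  -- basic facts about q
  have hbq : ∀ n (v : V n), bV n (q n v) = q (n + 1) (bV n v) := by
    intro n v
    simp only [hq, map_sub, hi', hp']
  have hqi : ∀ n (u : U n), q n (i n u) = 0 := by
    intro n u
    simp [hq, hpi']
  have hpq : ∀ n (v : V n), p n (q n v) = 0 := by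
    intro n v
    simp [hq, hpi']
  have hqq : ∀ n (v : V n), q n (q n v) = q n v := by
    intro n v
    rw [hq n (q n v), hpq, map_zero, sub_zero]
  -- the modified homotopy `h₁ = q ∘ h ∘ q`
  set h₁ : ∀ n, V (n + 1) →ₗ[K] V n :=
    fun n => (q n).comp ((h n).comp (q (n + 1))) with h1def
  have h1app : ∀ n (v : V (n + 1)), h₁ n v = q n (h n (q (n + 1) v)) := by
    intro n v; simp [h1def]
  have hqh1 : ∀ n (v : V (n + 1)), q n (h₁ n v) = h₁ n v := by
    intro n v; rw [h1app, hqq, ← h1app]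
  have hh1q : ∀ n (v : V (n + 1)), h₁ n (q (n + 1) v) = h₁ n v := by
    intro n v; rw [h1app, hqq, ← h1app]
  have hh1i : ∀ n (u : U (n + 1)), h₁ n (i (n + 1) u) = 0 := by
    intro n u; rw [h1app, hqi]; simp
  have hph1 : ∀ n (v : V (n + 1)), p n (h₁ n v) = 0 := by
    intro n v; rw [h1app, hpq]
  -- `h₁` is still a contracting homotopy
  have Hom : ∀ n (v : V (n + 1)),
      bV n (h₁ n v) + h₁ (n + 1) (bV (n + 1) v) = q (n + 1) v := by
    intro n v
    have e1 : bV n (h₁ n v) = q (n + 1) (bV n (h n (q (n + 1) v))) := by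
      rw [h1app, hbq]
    have e2 : h₁ (n + 1) (bV (n + 1) v) = q (n + 1) (h (n + 1) (bV (n + 1) (q (n + 1) v))) := by
      rw [h1app, hbq]
    rw [e1, e2, ← map_add]
    have := (hh' n (q (n + 1) v)).symm
    rw [this, ← hq, hqq, hqq]
  -- the final homotopy `h' = h₁ ∘ b ∘ h₁`
  refine ⟨fun n => (h₁ n).comp ((bV n).comp (h₁ n)), ?_, ?_, ?_, ?_⟩
  · -- homotopy identity
    intro n
    apply LinearMap.ext
    intro v
    simp only [LinearMap.sub_apply, LinearMap.add_apply, LinearMap.comp_apply,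
      LinearMap.id_apply]
    have t1 : bV n (h₁ n (bV n (h₁ n v))) = bV n (h₁ n v) := by
      have e := Hom n (bV n (h₁ n v))
      have z : h₁ (n + 1) (bV (n + 1) (bV n (h₁ n v))) = 0 := by
        rw [hbV', map_zero]
      rw [z, add_zero] at e
      rw [e, ← hbq, hqh1]
    have t2 : h₁ (n + 1) (bV (n + 1) (h₁ (n + 1) (bV (n + 1) v)))
        = h₁ (n + 1) (bV (n + 1) v) := by
      have e := Hom (n + 1) (bV (n + 1) v)
      have z : h₁ (n + 1 + 1) (bV (n + 1 + 1) (bV (n + 1) v)) = 0 := by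
        rw [hbV', map_zero]
      rw [z, add_zero] at e
      rw [e, hh1q]
    rw [t1, t2, Hom, hq]
  · -- h' ∘ h' = 0
    intro n
    apply LinearMap.ext
    intro x
    simp only [LinearMap.comp_apply, LinearMap.zero_apply]
    set z : V (n + 1) := h₁ (n + 1) x with hz
    set u : V (n + 1 + 1) := bV (n + 1) z with hu
    have inner : bV (n + 1) (h₁ (n + 1) u) = q (n + 1 + 1) u := by
      have e := Hom (n + 1) u
      have z0 : h₁ (n + 1 + 1) (bV (n + 1 + 1) u) = 0 := by
        rw [hu, hbV', map_zero]
      rw [z0, add_zero] at e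
      exact e
    have M : bV n (h₁ n (h₁ (n + 1) u)) = 0 := by
      have e := Hom n (h₁ (n + 1) u)
      rw [hqh1] at e
      have : h₁ (n + 1) (bV (n + 1) (h₁ (n + 1) u)) = h₁ (n + 1) u := by
        rw [inner, hh1q]
      rw [this] at e
      exact add_eq_right.mp e
    rw [M, map_zero]
  · -- h' ∘ i = 0
    intro n
    apply LinearMap.ext
    intro u
    simp only [LinearMap.comp_apply, LinearMap.zero_apply]
    rw [hh1i, map_zero, map_zero]
  · -- p ∘ h' = 0
    intro n
    apply LinearMap.ext
    intro v
    simp only [LinearMap.comp_apply, LinearMap.zero_apply]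
    rw [hph1]
end
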